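/- Let C = (C_1, …, C_g) be a cycle system for a matroid M, fix i ∈ {1,…,g}, and let S = C_{[g]} ∩ C_i, where C_{[g]} is the unique union over all of {1,…,g}. Then there exists a circuit of M contained in C_i and containing S. Moreover, if S contains a loop ℓ of M, then S = {ℓ}. -/

import Mathlib

open Set Matroid

/-- The unique union of the subfamily of `A` indexed by `σ`: the set of elements that lie in
`A i` for exactly one index `i ∈ σ`. -/
def uniqueUnion {α ι : Type*} (A : ι → Set α) (σ : Finset ι) : Set α :=
  {e | ∃! i, i ∈ σ ∧ e ∈ A i}

namespace Matroid

variable {α : Type*}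

/-- A circuit of a matroid: a minimal dependent set. -/
def Circuit (M : Matroid α) (C : Set α) : Prop := Minimal M.Dep C

/-- A cycle of a matroid: a union of circuits. -/
def IsCycle (M : Matroid α) (K : Set α) : Prop :=
  ∃ S : Set (Set α), (∀ C ∈ S, M.Circuit C) ∧ K = ⋃₀ S

/-- The rank of a matroid: the cardinality of a base. -/
noncomputable def rkNat (M : Matroid α) : ℕ := M.exists_isBase.choose.ncard

/-- A cycle system for `M`: a family of cycles, indexed by a finite type whose cardinality is
the corank `|E| - rank` of `M`, such that the unique union of every nonempty subfamily is
dependent. -/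
def IsCycleSystem (M : Matroid α) {ι : Type*} [Fintype ι] (C : ι → Set α) : Prop :=
  Fintype.card ι = M.E.ncard - M.rkNat ∧ (∀ i, M.IsCycle (C i)) ∧
    ∀ σ : Finset ι, σ.Nonempty → M.Dep (uniqueUnion C σ)

/-- Deletion of a set of elements from a matroid. -/
def delete' (M : Matroid α) (D : Set α) : Matroid α := M ↾ (M.E \ D)

/-- Contraction of a set of elements in a matroid, defined via duality. -/
def contract' (M : Matroid α) (X : Set α) : Matroid α := (M✶.delete' X)✶

end Matroid

/-- A coparking function with respect to a family `C` of sets: a vector `a` of naturals such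
that every nonempty index set `σ` contains some `i` with `a i < |C i ∩ uniqueUnion C σ|`. -/
def IsCoparking {α ι : Type*} [Fintype ι] (C : ι → Set α) (a : ι → ℕ) : Prop :=
  ∀ σ : Finset ι, σ.Nonempty → ∃ i ∈ σ, a i < (C i ∩ uniqueUnion C σ).ncard

/-! ### Auxiliary rank theory -/

namespace Matroid

variable {α : Type*} {M : Matroid α} {I J X Y A B D : Set α} {e : α}

/-- A local rank function: the cardinality of a `Basis'` of `X`. -/
noncomputable def rnk (M : Matroid α) (X : Set α) : ℕ := (M.exists_isBasis' X).choose.ncard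

lemma IsBasis'.rnk_eq (hI : M.IsBasis' I X) : M.rnk X = I.ncard := by
  have h := (M.exists_isBasis' X).choose_spec.encard_eq_encard hI
  rw [rnk, Set.ncard_def, Set.ncard_def, h]

lemma rnk_congr (h : M.closure X = M.closure Y) : M.rnk X = M.rnk Y := by
  obtain ⟨I, hI⟩ := M.exists_isBasis' X
  obtain ⟨J, hJ⟩ := M.exists_isBasis' Y
  rw [hI.rnk_eq, hJ.rnk_eq]
  have h1 : M.IsBasis I (M.closure Y) := h ▸ hI.isBasis_closure_right
  have h2 := h1.encard_eq_encard hJ.isBasis_closure_right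
  rw [Set.ncard_def, Set.ncard_def, h2]

lemma rnk_le_ncard (hX : X.Finite) : M.rnk X ≤ X.ncard := by
  obtain ⟨I, hI⟩ := M.exists_isBasis' X
  rw [hI.rnk_eq]
  exact Set.ncard_le_ncard hI.subset hX

lemma Indep.ncard_le_rnk (hI : M.Indep I) (hIX : I ⊆ X) (hX : X.Finite) :
    I.ncard ≤ M.rnk X := by
  obtain ⟨J, hJ, hIJ⟩ := hI.subset_isBasis'_of_subset hIX
  rw [hJ.rnk_eq]
  exact Set.ncard_le_ncard hIJ (hX.subset hJ.subset)

lemma rnk_mono (h : X ⊆ Y) (hY : Y.Finite) : M.rnk X ≤ M.rnk Y := by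
  obtain ⟨I, hI⟩ := M.exists_isBasis' X
  rw [hI.rnk_eq]
  exact hI.indep.ncard_le_rnk (hI.subset.trans h) hY

lemma Indep.rnk_eq_ncard (hX : M.Indep X) : M.rnk X = X.ncard :=
  hX.isBasis_self.isBasis'.rnk_eq

lemma indep_of_ncard_le_rnk (hX : X.Finite) (h : X.ncard ≤ M.rnk X) : M.Indep X := by
  obtain ⟨I, hI⟩ := M.exists_isBasis' X
  rw [hI.rnk_eq] at h
  have hIX : I = X := Set.eq_of_subset_of_ncard_le hI.subset h hX
  exact hIX ▸ hI.indep

lemma dep_of_rnk_lt (hXE : X ⊆ M.E) (_hX : X.Finite) (h : M.rnk X < X.ncard) : M.Dep X := by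
  rw [dep_iff]
  refine ⟨fun hind => ?_, hXE⟩
  rw [hind.rnk_eq_ncard] at h
  exact lt_irrefl _ h

lemma rnk_union_le (hX : X.Finite) (hY : Y.Finite) :
    M.rnk (X ∪ Y) ≤ M.rnk X + (Y \ X).ncard := by
  obtain ⟨J, hJ⟩ := M.exists_isBasis' (X ∪ Y)
  rw [hJ.rnk_eq]
  have hJfin : J.Finite := (hX.union hY).subset hJ.subset
  have h1 : (J ∩ X).ncard + (J \ X).ncard = J.ncard :=
    Set.ncard_inter_add_ncard_diff_eq_ncard J X hJfin
  have h2 : (J ∩ X).ncard ≤ M.rnk X :=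
    (hJ.indep.subset inter_subset_left).ncard_le_rnk inter_subset_right hX
  have h3 : (J \ X).ncard ≤ (Y \ X).ncard := by
    refine Set.ncard_le_ncard (fun x hx => ⟨?_, hx.2⟩) (hY.diff (t := X))
    rcases hJ.subset hx.1 with h | h
    · exact absurd h hx.2
    · exact h
  omega

lemma rnk_submod (hA : A.Finite) (hB : B.Finite) :
    M.rnk (A ∪ B) + M.rnk (A ∩ B) ≤ M.rnk A + M.rnk B := by
  obtain ⟨I, hI⟩ := M.exists_isBasis' (A ∩ B)
  obtain ⟨J, hJ, hIJ⟩ := hI.indep.subset_isBasis'_of_subset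
    (hI.subset.trans (inter_subset_left.trans subset_union_left))
  rw [hJ.rnk_eq, hI.rnk_eq]
  have hJfin : J.Finite := (hA.union hB).subset hJ.subset
  have hIeq : J ∩ (A ∩ B) = I := by
    refine subset_antisymm ?_ (subset_inter hIJ hI.subset)
    exact hI.2 ⟨hJ.indep.subset inter_subset_left, inter_subset_right⟩
      (subset_inter hIJ hI.subset)
  have h1 : (J ∩ A) ∪ (J ∩ B) = J := by
    rw [← inter_union_distrib_left]
    exact inter_eq_left.mpr hJ.subset
  have h2 : (J ∩ A) ∩ (J ∩ B) = I := by
    rw [← hIeq]; ext x; constructor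
    · rintro ⟨⟨hx1, hx2⟩, ⟨-, hx3⟩⟩; exact ⟨hx1, hx2, hx3⟩
    · rintro ⟨hx1, hx2, hx3⟩; exact ⟨⟨hx1, hx2⟩, ⟨hx1, hx3⟩⟩
  have key : J.ncard + I.ncard = (J ∩ A).ncard + (J ∩ B).ncard := by
    rw [← Set.ncard_union_add_ncard_inter (J ∩ A) (J ∩ B) (hJfin.subset inter_subset_left)
      (hJfin.subset inter_subset_left), h1, h2]
  have h3 : (J ∩ A).ncard ≤ M.rnk A :=
    (hJ.indep.subset inter_subset_left).ncard_le_rnk inter_subset_right hA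
  have h4 : (J ∩ B).ncard ≤ M.rnk B :=
    (hJ.indep.subset inter_subset_left).ncard_le_rnk inter_subset_right hB
  omega

lemma rnk_ground_eq_rkNat (M : Matroid α) : M.rnk M.E = M.rkNat :=
  M.exists_isBase.choose_spec.isBasis_ground.isBasis'.rnk_eq

/-! ### Circuits -/

lemma Circuit.dep (hD : M.Circuit D) : M.Dep D := hD.1

lemma Circuit.diff_singleton_indep (hD : M.Circuit D) (he : e ∈ D) : M.Indep (D \ {e}) := by
  rw [← not_dep_iff (diff_subset.trans hD.1.subset_ground)]
  intro hdep
  exact (hD.2 hdep diff_subset he).2 rfl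

lemma Circuit.mem_closure_diff_singleton (hD : M.Circuit D) (he : e ∈ D) :
    e ∈ M.closure (D \ {e}) := by
  have hind := hD.diff_singleton_indep he
  have hdep : M.Dep (insert e (D \ {e})) := by
    rw [Set.insert_diff_singleton, Set.insert_eq_of_mem he]
    exact hD.1
  exact ((hind.insert_dep_iff).mp hdep).1

lemma Circuit.rnk_diff_singleton (hD : M.Circuit D) (he : e ∈ D) (hDX : D ⊆ X) :
    M.rnk (X \ {e}) = M.rnk X := by
  apply rnk_congr
  apply closure_diff_singleton_eq_closure
  exact M.closure_subset_closure (diff_subset_diff_left hDX)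
    (hD.mem_closure_diff_singleton he)

private lemma exists_circuit_subset_aux :
    ∀ n (X : Set α), X.Finite → X.ncard ≤ n → M.Dep X → ∃ D ⊆ X, M.Circuit D := by
  intro n
  induction n with
  | zero =>
    intro X hfin hcard hdep
    obtain ⟨e, he⟩ := hdep.nonempty
    have : 0 < X.ncard := (Set.ncard_pos hfin).mpr ⟨e, he⟩
    omega
  | succ n IH =>
    intro X hfin hcard hdep
    by_cases h : Minimal M.Dep X
    · exact ⟨X, subset_rfl, h⟩
    · have hex : ∃ Y, M.Dep Y ∧ Y ⊆ X ∧ ¬X ⊆ Y := by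
        by_contra hc
        push_neg at hc
        exact h ⟨hdep, fun Y hY hYX => hc Y hY hYX⟩
      obtain ⟨Y, hYdep, hYX, hXY⟩ := hex
      have hlt : Y.ncard < X.ncard := Set.ncard_lt_ncard ⟨hYX, hXY⟩ hfin
      obtain ⟨D, hDY, hD⟩ := IH Y (hfin.subset hYX) (by omega) hYdep
      exact ⟨D, hDY.trans hYX, hD⟩

lemma Dep.exists_circuit_subset (hdep : M.Dep X) (hfin : X.Finite) :
    ∃ D ⊆ X, M.Circuit D :=
  exists_circuit_subset_aux X.ncard X hfin le_rfl hdep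

/-! ### Cycles -/

lemma IsCycle.subset_ground (h : M.IsCycle X) : X ⊆ M.E := by
  obtain ⟨S, hS, rfl⟩ := h
  exact sUnion_subset fun D hD => (hS D hD).dep.subset_ground

lemma IsCycle.exists_circuit_mem (h : M.IsCycle X) (he : e ∈ X) :
    ∃ D, M.Circuit D ∧ e ∈ D ∧ D ⊆ X := by
  obtain ⟨S, hS, rfl⟩ := h
  obtain ⟨D, hD, heD⟩ := he
  exact ⟨D, hS D hD, heD, subset_sUnion_of_mem hD⟩

end Matroid

/-! ### The main counting lemma -/

lemma uniqueUnion_subset_biUnion {α ι : Type*} (A : ι → Set α) (σ : Finset ι) :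
    uniqueUnion A σ ⊆ ⋃ j ∈ σ, A j := by
  rintro e ⟨j, ⟨hjσ, hjA⟩, -⟩
  exact Set.mem_biUnion hjσ hjA

/-- In a hypothetical cycle-like family, the nullity of the union of the sets indexed by `σ` is
at least `|σ|`. -/
lemma cycleSystem_nullity_lower {α : Type*} {g : ℕ} {M : Matroid α} (hE : M.E.Finite)
    {C : Fin g → Set α} (hCsub : ∀ j, C j ⊆ M.E)
    (hdep : ∀ σ : Finset (Fin g), σ.Nonempty → M.Dep (uniqueUnion C σ)) :
    ∀ σ : Finset (Fin g), M.rnk (⋃ j ∈ σ, C j) + σ.card ≤ (⋃ j ∈ σ, C j).ncard := by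
  intro σ
  induction σ using Finset.strongInductionOn with
  | _ σ IH =>
  rcases σ.eq_empty_or_nonempty with rfl | hne
  · simpa using M.rnk_le_ncard Set.finite_empty
  have hWsub : (⋃ j ∈ σ, C j) ⊆ M.E := Set.iUnion₂_subset fun j _ => hCsub j
  have hWfin : (⋃ j ∈ σ, C j).Finite := hE.subset hWsub
  set W := ⋃ j ∈ σ, C j with hWdef
  obtain ⟨D, hDsub, hD⟩ := (hdep σ hne).exists_circuit_subset
    (hWfin.subset (uniqueUnion_subset_biUnion C σ))
  obtain ⟨e, heD⟩ := hD.dep.nonempty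
  obtain ⟨k, ⟨hkσ, hek⟩, hkuniq⟩ := hDsub heD
  set τ := σ.erase k with hτdef
  set Wτ := ⋃ j ∈ τ, C j with hWτdef
  have hτσ : τ ⊂ σ := Finset.erase_ssubset hkσ
  have hWτW : Wτ ⊆ W := Set.iUnion₂_subset fun j hj =>
    Set.subset_biUnion_of_mem (Finset.mem_of_mem_erase hj)
  have hWτfin : Wτ.Finite := hWfin.subset hWτW
  have heW : e ∈ W := Set.mem_biUnion hkσ hek
  have heτ : e ∉ Wτ := by
    intro hmem
    obtain ⟨j, hj, hej⟩ := Set.mem_iUnion₂.mp hmem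
    have : j = k := hkuniq j ⟨Finset.mem_of_mem_erase hj, hej⟩
    exact (Finset.ne_of_mem_erase hj) this
  -- e is not a coloop of W since it is in a circuit inside W
  have hDW : D ⊆ W := hDsub.trans (uniqueUnion_subset_biUnion C σ)
  have hstep : M.rnk (W \ {e}) = M.rnk W := hD.rnk_diff_singleton heD hDW
  -- W \ {e} = Wτ ∪ (W \ {e})
  have hcover : Wτ ∪ (W \ {e}) = W \ {e} :=
    Set.union_eq_self_of_subset_left (Set.subset_diff_singleton hWτW heτ)
  have hbound : M.rnk (W \ {e}) ≤ M.rnk Wτ + ((W \ {e}) \ Wτ).ncard := by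
    calc M.rnk (W \ {e}) = M.rnk (Wτ ∪ (W \ {e})) := by rw [hcover]
    _ ≤ M.rnk Wτ + ((W \ {e}) \ Wτ).ncard := M.rnk_union_le hWτfin (hWfin.diff (t := {e}))
  have hsubdiff : (W \ {e}) \ Wτ = (W \ Wτ) \ {e} := by
    ext x; constructor
    · rintro ⟨⟨hx1, hx2⟩, hx3⟩; exact ⟨⟨hx1, hx3⟩, hx2⟩
    · rintro ⟨⟨hx1, hx2⟩, hx3⟩; exact ⟨⟨hx1, hx3⟩, hx2⟩
  have heWτ : e ∈ W \ Wτ := ⟨heW, heτ⟩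
  have hdiffcard : ((W \ Wτ) \ {e}).ncard + 1 = (W \ Wτ).ncard :=
    Set.ncard_diff_singleton_add_one heWτ (hWfin.diff (t := Wτ))
  have hIH := IH τ hτσ
  rw [← hWτdef] at hIH
  have hcardτ : τ.card + 1 = σ.card := Finset.card_erase_add_one hkσ
  have hncard : (W \ Wτ).ncard + Wτ.ncard = W.ncard :=
    Set.ncard_diff_add_ncard_of_subset hWτW hWfin
  rw [hsubdiff] at hbound
  omega

/-- With `S = C_{[g]} ∩ C i`, there is a circuit of `M` contained in `C i` and
containing `S`; and if `S` contains a loop `ℓ`, then `S = {ℓ}`. -/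
theorem statement_5 {α : Type*} {g : ℕ} (M : Matroid α) (hE : M.E.Finite)
    (C : Fin g → Set α) (hCS : M.IsCycleSystem C) (i : Fin g) :
    (∃ K, M.Circuit K ∧ K ⊆ C i ∧ uniqueUnion C Finset.univ ∩ C i ⊆ K) ∧
      (∀ ℓ ∈ uniqueUnion C Finset.univ ∩ C i, M.Dep {ℓ} →
        uniqueUnion C Finset.univ ∩ C i = {ℓ}) := by
  classical
  obtain ⟨hgcard, hcyc, hdep⟩ := hCS
  rw [Fintype.card_fin] at hgcard
  have hCsub : ∀ j, C j ⊆ M.E := fun j => (hcyc j).subset_ground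
  set S := uniqueUnion C Finset.univ ∩ C i with hSdef
  have hAE : C i ⊆ M.E := hCsub i
  have hAfin : (C i).Finite := hE.subset hAE
  have hSA : S ⊆ C i := Set.inter_subset_right
  have hSfin : S.Finite := hAfin.subset hSA
  have part1 : ∃ K, M.Circuit K ∧ K ⊆ C i ∧ S ⊆ K := by
    rcases S.eq_empty_or_nonempty with hSe | hSne
    · -- S is empty: any circuit inside C i works
      have hCidep : M.Dep (C i) := by
        have h := hdep {i} (Finset.singleton_nonempty i)
        have heq : uniqueUnion C {i} = C i := by
          ext e
          constructor
          · rintro ⟨j, ⟨hj, hej⟩, -⟩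
            rw [Finset.mem_singleton] at hj
            exact hj ▸ hej
          · intro he
            exact ⟨i, ⟨Finset.mem_singleton_self i, he⟩, fun y hy =>
              Finset.mem_singleton.mp hy.1⟩
        rwa [heq] at h
      obtain ⟨K, hKsub, hK⟩ := hCidep.exists_circuit_subset hAfin
      exact ⟨K, hK, hKsub, hSe ▸ Set.empty_subset K⟩
    -- Main case: S nonempty
    set B := ⋃ j ∈ Finset.univ.erase i, C j with hBdef
    set V := ⋃ j ∈ (Finset.univ : Finset (Fin g)), C j with hVdef
    have hBE : B ⊆ M.E := Set.iUnion₂_subset fun j _ => hCsub j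
    have hVE : V ⊆ M.E := Set.iUnion₂_subset fun j _ => hCsub j
    have hBfin : B.Finite := hE.subset hBE
    have hVfin : V.Finite := hE.subset hVE
    -- S = C i \ B
    have hSAB : S = C i \ B := by
      ext e
      constructor
      · rintro ⟨⟨j₀, ⟨-, hej₀⟩, huq⟩, heA⟩
        refine ⟨heA, fun heB => ?_⟩
        obtain ⟨j, hj, hej⟩ := Set.mem_iUnion₂.mp heB
        have h1 : j = j₀ := huq j ⟨Finset.mem_univ j, hej⟩
        have h2 : i = j₀ := huq i ⟨Finset.mem_univ i, heA⟩
        exact Finset.ne_of_mem_erase hj (h1.trans h2.symm)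
      · rintro ⟨heA, heB⟩
        refine ⟨⟨i, ⟨Finset.mem_univ i, heA⟩, fun y hy => ?_⟩, heA⟩
        by_contra hyi
        exact heB (Set.mem_biUnion (Finset.mem_erase.mpr ⟨hyi, Finset.mem_univ y⟩) hy.2)
    -- V = B ∪ C i
    have hVBA : V = B ∪ C i := by
      ext e
      simp only [hVdef, hBdef, Set.mem_iUnion₂, Set.mem_union]
      constructor
      · rintro ⟨j, -, hej⟩
        by_cases hji : j = i
        · exact Or.inr (hji ▸ hej)
        · exact Or.inl ⟨j, Finset.mem_erase.mpr ⟨hji, Finset.mem_univ j⟩, hej⟩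
      · rintro (⟨j, hj, hej⟩ | he)
        · exact ⟨j, Finset.mem_univ j, hej⟩
        · exact ⟨i, Finset.mem_univ i, he⟩
    have hVBS : V = B ∪ S := by
      rw [hVBA, hSAB, Set.union_diff_self]
    have hdisjBS : Disjoint B S := by
      rw [hSAB]
      exact Set.disjoint_sdiff_right.mono_left (le_refl B) |>.symm.symm
    have hAS : C i ∩ B = C i \ S := by
      rw [hSAB, Set.diff_diff_right_self]
    -- rank inequalities
    have hmainB := cycleSystem_nullity_lower hE hCsub hdep (Finset.univ.erase i)
    rw [← hBdef] at hmainB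
    have hcard_erase : (Finset.univ.erase i).card + 1 = g := by
      rw [Finset.card_erase_add_one (Finset.mem_univ i), Finset.card_univ, Fintype.card_fin]
    have hrE : M.rnk M.E ≤ M.E.ncard := M.rnk_le_ncard hE
    have hgE : M.E.ncard = M.rnk M.E + g := by
      rw [M.rnk_ground_eq_rkNat] at hrE ⊢
      omega
    have hVbudget : V.ncard ≤ M.rnk V + g := by
      have h1 : M.rnk (V ∪ M.E) ≤ M.rnk V + (M.E \ V).ncard := M.rnk_union_le hVfin hE
      have h2 : V ∪ M.E = M.E := Set.union_eq_self_of_subset_left hVE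
      rw [h2] at h1
      have h3 : (M.E \ V).ncard + V.ncard = M.E.ncard :=
        Set.ncard_diff_add_ncard_of_subset hVE hE
      omega
    have hsubmod := M.rnk_submod hAfin hBfin
    have hunionV : C i ∪ B = V := by rw [hVBA, Set.union_comm]
    rw [hunionV, hAS] at hsubmod
    have huncard : V.ncard = B.ncard + S.ncard := by
      rw [hVBS, Set.ncard_union_eq hdisjBS hBfin hSfin]
    -- star: S.ncard + rnk (C i \ S) ≤ rnk (C i) + 1
    have hstar : S.ncard + M.rnk (C i \ S) ≤ M.rnk (C i) + 1 := by omega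
    -- strict direction
    obtain ⟨e, heS⟩ := hSne
    have heA : e ∈ C i := hSA heS
    obtain ⟨De, hDe, heDe, hDeA⟩ := (hcyc i).exists_circuit_mem heA
    have h7a : M.rnk (C i \ {e}) = M.rnk (C i) := hDe.rnk_diff_singleton heDe hDeA
    have h7b : C i \ {e} = (C i \ S) ∪ (S \ {e}) := by
      ext x
      constructor
      · rintro ⟨hx1, hx2⟩
        by_cases hxS : x ∈ S
        · exact Or.inr ⟨hxS, hx2⟩
        · exact Or.inl ⟨hx1, hxS⟩
      · rintro (⟨hx1, hx2⟩ | ⟨hx1, hx2⟩)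
        · refine ⟨hx1, fun hxe => hx2 ?_⟩
          rw [Set.mem_singleton_iff] at hxe
          exact hxe ▸ heS
        · exact ⟨hSA hx1, hx2⟩
    have h7c : M.rnk ((C i \ S) ∪ (S \ {e})) ≤ M.rnk (C i \ S) + ((S \ {e}) \ (C i \ S)).ncard :=
      M.rnk_union_le (hAfin.diff (t := S)) (hSfin.diff (t := {e}))
    have h7d : ((S \ {e}) \ (C i \ S)).ncard ≤ (S \ {e}).ncard :=
      Set.ncard_le_ncard Set.diff_subset (hSfin.diff (t := {e}))
    have h7e : (S \ {e}).ncard + 1 = S.ncard := Set.ncard_diff_singleton_add_one heS hSfin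
    have hstrict : M.rnk (C i) + 1 ≤ M.rnk (C i \ S) + S.ncard := by
      rw [← h7a, h7b]
      omega
    -- the construction
    obtain ⟨I, hI⟩ := M.exists_isBasis' (C i \ S)
    have hIfin : I.Finite := (hAfin.diff (t := S)).subset hI.subset
    set X := I ∪ S with hXdef
    have hXA : X ⊆ C i := Set.union_subset (hI.subset.trans Set.diff_subset) hSA
    have hXfin : X.Finite := hIfin.union hSfin
    have hdisjIS : Disjoint I S :=
      Set.disjoint_sdiff_left.mono_left hI.subset
    have hXcard : X.ncard = M.rnk (C i) + 1 := by
      rw [hXdef, Set.ncard_union_eq hdisjIS hIfin hSfin, ← hI.rnk_eq]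
      omega
    have hXdep : M.Dep X := by
      apply M.dep_of_rnk_lt (hXA.trans hAE) hXfin
      have : M.rnk X ≤ M.rnk (C i) := M.rnk_mono hXA hAfin
      omega
    obtain ⟨K, hKX, hK⟩ := hXdep.exists_circuit_subset hXfin
    refine ⟨K, hK, hKX.trans hXA, ?_⟩
    intro s hsS
    by_contra hsK
    -- X \ {s} is independent, but contains the circuit K
    have hsX : s ∈ X := Or.inr hsS
    have hsI : s ∉ I := fun hsI => (hdisjIS.ne_of_mem hsI hsS) rfl
    have hXs_eq : X \ {s} = I ∪ (S \ {s}) := by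
      rw [hXdef, Set.union_diff_distrib, Set.diff_singleton_eq_self hsI]
    have hcl : M.closure (I ∪ (S \ {s})) = M.closure ((C i \ S) ∪ (S \ {s})) := by
      rw [← M.closure_union_closure_left_eq I (S \ {s}), hI.closure_eq_closure,
        M.closure_union_closure_left_eq]
    have hAs_eq : (C i \ S) ∪ (S \ {s}) = C i \ {s} := by
      ext x
      constructor
      · rintro (⟨hx1, hx2⟩ | ⟨hx1, hx2⟩)
        · refine ⟨hx1, fun hxs => hx2 ?_⟩
          rw [Set.mem_singleton_iff] at hxs
          exact hxs ▸ hsS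
        · exact ⟨hSA hx1, hx2⟩
      · rintro ⟨hx1, hx2⟩
        by_cases hxS : x ∈ S
        · exact Or.inr ⟨hxS, hx2⟩
        · exact Or.inl ⟨hx1, hxS⟩
    obtain ⟨Ds, hDs, hsDs, hDsA⟩ := (hcyc i).exists_circuit_mem (hSA hsS)
    have hAs_rnk : M.rnk (C i \ {s}) = M.rnk (C i) := hDs.rnk_diff_singleton hsDs hDsA
    have hXs_rnk : M.rnk (X \ {s}) = M.rnk (C i) := by
      rw [hXs_eq, Matroid.rnk_congr hcl, hAs_eq, hAs_rnk]
    have hXs_card : (X \ {s}).ncard + 1 = X.ncard :=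
      Set.ncard_diff_singleton_add_one hsX hXfin
    have hXs_indep : M.Indep (X \ {s}) := by
      apply M.indep_of_ncard_le_rnk (hXfin.diff (t := {s}))
      omega
    exact hK.dep.not_indep (hXs_indep.subset (Set.subset_diff_singleton hKX hsK))
  refine ⟨part1, ?_⟩
  intro ℓ hℓ hdepℓ
  obtain ⟨K, hK, -, hSK⟩ := part1
  have hℓK : {ℓ} ⊆ K := Set.singleton_subset_iff.mpr (hSK hℓ)
  have hKl : K = {ℓ} := subset_antisymm (hK.2 hdepℓ hℓK) hℓK
  exact subset_antisymm (hKl ▸ hSK) (Set.singleton_subset_iff.mpr hℓ)
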